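/- The filling map f : ℱ(λ) → T(λ,n) is surjective: for every nonattacking filling σ ∈ T(λ,n) there exists a folding pair (w,T) with f(w,T) = σ. -/

import Mathlib

open Finset

namespace Compress

attribute [local instance] Classical.propDecidable

noncomputable section

/-! ### Permutations of `{1,…,n}`, 1-based conventions -/

/-- The 1-based index `i ∈ {1,…,n}` as an element of `Fin n`. -/
def idx (n : ℕ) [NeZero n] (i : ℕ) : Fin n :=
  ⟨(i - 1) % n, Nat.mod_lt _ (Nat.pos_of_ne_zero (NeZero.ne n))⟩

/-- The 1-based value `w(i) ∈ {1,…,n}` of a permutation `w ∈ S_n`. -/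
def pv {n : ℕ} [NeZero n] (w : Equiv.Perm (Fin n)) (i : ℕ) : ℕ :=
  (w (idx n i)).val + 1

/-- The transposition `(i,k)` of `{1,…,n}` (1-based). -/
def tr (n : ℕ) [NeZero n] (i k : ℕ) : Equiv.Perm (Fin n) :=
  Equiv.swap (idx n i) (idx n k)

/-- The Coxeter length of `w ∈ S_n`, i.e. its number of inversions. -/
def len {n : ℕ} [NeZero n] (w : Equiv.Perm (Fin n)) : ℕ :=
  ((Finset.univ : Finset (Fin n × Fin n)).filter fun p => p.1 < p.2 ∧ w p.2 < w p.1).card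

/-- Right multiplication of `w` by a list of transpositions (given as 1-based pairs),
taken from left to right. -/
def applyTs {n : ℕ} [NeZero n] (w : Equiv.Perm (Fin n)) (L : List (ℕ × ℕ)) :
    Equiv.Perm (Fin n) :=
  L.foldl (fun u p => u * tr n p.1 p.2) w

/-! ### Subsequences of a list of transpositions, encoded by sets of positions -/

/-- The subsequence of the list `Δ` of transpositions occupying the (0-based) positions in `J`,
listed in increasing order of positions. -/
def pickP (Δ : List (ℕ × ℕ)) (J : Finset ℕ) : List (ℕ × ℕ) :=
  (J.sort (· ≤ ·)).map fun r => Δ.getD r (0, 0)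

/-- `w r_1 ⋯ r_s` where `r_1,…,r_s` is the subsequence of `Δ` at positions `J`. -/
def wT {n : ℕ} [NeZero n] (w : Equiv.Perm (Fin n)) (Δ : List (ℕ × ℕ)) (J : Finset ℕ) :
    Equiv.Perm (Fin n) :=
  applyTs w (pickP Δ J)

/-- The partial product `w r_1 ⋯ r_{a-1}` just before using the entry at position `r ∈ J`. -/
def stepPerm {n : ℕ} [NeZero n] (w : Equiv.Perm (Fin n)) (Δ : List (ℕ × ℕ)) (J : Finset ℕ)
    (r : ℕ) : Equiv.Perm (Fin n) :=
  applyTs w (pickP Δ (J.filter fun x => x < r))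

/-- The entry at position `r ∈ J` is positive in the increasing-length convention:
`ℓ(w r_1⋯r_{a−1}) < ℓ(w r_1⋯r_a)`. -/
def isPosInc {n : ℕ} [NeZero n] (w : Equiv.Perm (Fin n)) (Δ : List (ℕ × ℕ)) (J : Finset ℕ)
    (r : ℕ) : Prop :=
  len (stepPerm w Δ J r) <
    len (stepPerm w Δ J r * tr n (Δ.getD r (0, 0)).1 (Δ.getD r (0, 0)).2)

/-- The entry at position `r ∈ J` is positive in the decreasing-length convention
(a positive folding): `ℓ(w r_1⋯r_{a−1}) > ℓ(w r_1⋯r_a)`. -/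
def isPosDec {n : ℕ} [NeZero n] (w : Equiv.Perm (Fin n)) (Δ : List (ℕ × ℕ)) (J : Finset ℕ)
    (r : ℕ) : Prop :=
  len (stepPerm w Δ J r * tr n (Δ.getD r (0, 0)).1 (Δ.getD r (0, 0)).2) <
    len (stepPerm w Δ J r)

/-! ### The field `ℚ(q,t)` -/

/-- The field `ℚ(q,t)` of rational functions in two variables. -/
abbrev Kqt : Type := FractionRing (MvPolynomial (Fin 2) ℚ)

/-- The variable `q` of `ℚ(q,t)`. -/
def qq : Kqt := algebraMap (MvPolynomial (Fin 2) ℚ) Kqt (MvPolynomial.X 0)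

/-- The variable `t` of `ℚ(q,t)`. -/
def tt : Kqt := algebraMap (MvPolynomial (Fin 2) ℚ) Kqt (MvPolynomial.X 1)

/-! ### The partition λ, its diagram and statistics on fillings -/

/-- `conj n lam j = λ'_j`, the length of column `j`. -/
def conj (n : ℕ) (lam : ℕ → ℕ) (j : ℕ) : ℕ :=
  ((Finset.Icc 1 (n - 1)).filter fun i => j ≤ lam i).card

/-- The cells `(i,j)` of the Young diagram of λ: `1 ≤ i ≤ n−1`, `1 ≤ j ≤ λ_i`. -/
def cells (n : ℕ) (lam : ℕ → ℕ) : Finset (ℕ × ℕ) :=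
  (Finset.Icc 1 (n - 1) ×ˢ Finset.Icc 1 (lam 1)).filter fun c => c.2 ≤ lam c.1

/-- Two cells attack each other: same column, or consecutive columns with the
left-column cell strictly above the right-column cell (column `j+1` is left of column `j`). -/
def attack (u v : ℕ × ℕ) : Prop :=
  (u.2 = v.2 ∧ u.1 ≠ v.1) ∨ (u.2 = v.2 + 1 ∧ u.1 < v.1) ∨ (v.2 = u.2 + 1 ∧ v.1 < u.1)

/-- `u` comes before `v` in the reading order (columns right to left, i.e. column 1 first,
each column top to bottom). -/
def readBefore (u v : ℕ × ℕ) : Prop :=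
  u.2 < v.2 ∨ (u.2 = v.2 ∧ u.1 < v.1)

/-- σ is a nonattacking filling of λ with entries in `{1,…,n}`, i.e. `σ ∈ T(λ,n)`. -/
def NonAttacking (n : ℕ) (lam : ℕ → ℕ) (σ : ℕ × ℕ → ℕ) : Prop :=
  (∀ u ∈ cells n lam, σ u ∈ Finset.Icc 1 n) ∧
    ∀ u ∈ cells n lam, ∀ v ∈ cells n lam, attack u v → σ u ≠ σ v

/-- The descent set of a filling. -/
def DesSet (n : ℕ) (lam : ℕ → ℕ) (σ : ℕ × ℕ → ℕ) : Finset (ℕ × ℕ) :=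
  (cells n lam).filter fun u => (u.1, u.2 + 1) ∈ cells n lam ∧ σ (u.1, u.2 + 1) < σ u

/-- `Diff(σ)`. -/
def DiffSet (n : ℕ) (lam : ℕ → ℕ) (σ : ℕ × ℕ → ℕ) : Finset (ℕ × ℕ) :=
  (cells n lam).filter fun u => (u.1, u.2 + 1) ∈ cells n lam ∧ σ (u.1, u.2 + 1) ≠ σ u

/-- `arm(i,j) = λ_i − j`. -/
def armC (lam : ℕ → ℕ) (u : ℕ × ℕ) : ℕ := lam u.1 - u.2

/-- `leg(i,j) = λ'_j − i`. -/
def legC (n : ℕ) (lam : ℕ → ℕ) (u : ℕ × ℕ) : ℕ := conj n lam u.2 - u.1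

/-- `maj(σ) = Σ_{u ∈ Des(σ)} arm(u)`. -/
def majStat (n : ℕ) (lam : ℕ → ℕ) (σ : ℕ × ℕ → ℕ) : ℕ :=
  ∑ u ∈ DesSet n lam σ, armC lam u

/-- `|Inv(σ)|`: the number of pairs of attacking cells `u` before `v` in reading order
with `σ(u) > σ(v)`. -/
def invPairsL (n : ℕ) (lam : ℕ → ℕ) (σ : ℕ × ℕ → ℕ) : ℕ :=
  ((cells n lam ×ˢ cells n lam).filter fun x =>
    attack x.1 x.2 ∧ readBefore x.1 x.2 ∧ σ x.2 < σ x.1).card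

/-- `inv(σ) = |Inv(σ)| − Σ_{u ∈ Des(σ)} leg(u)`. -/
def invStat (n : ℕ) (lam : ℕ → ℕ) (σ : ℕ × ℕ → ℕ) : ℤ :=
  (invPairsL n lam σ : ℤ) - ∑ u ∈ DesSet n lam σ, (legC n lam u : ℤ)

/-- `n(λ) = Σ_i (i−1) λ_i`. -/
def nlam (n : ℕ) (lam : ℕ → ℕ) : ℕ :=
  ∑ i ∈ Finset.Icc 1 n, (i - 1) * lam i

/-- The Haglund–Haiman–Loehr-type weight of a filling:
`HHL(σ) = t^{n(λ)−inv(σ)} q^{maj(σ)} Π_{u∈Diff(σ)} (1−t)/(1−q^{arm(u)} t^{leg(u)+1})`. -/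
def HHL (n : ℕ) (lam : ℕ → ℕ) (σ : ℕ × ℕ → ℕ) : Kqt :=
  tt ^ ((nlam n lam : ℤ) - invStat n lam σ) * qq ^ majStat n lam σ *
    ∏ u ∈ DiffSet n lam σ, (1 - tt) / (1 - qq ^ armC lam u * tt ^ (legC n lam u + 1))

/-! ### The λ-chain Γ -/

/-- The row `(i,n),(i,n−1),…,(i,low)`. -/
def rowL (n i low : ℕ) : List (ℕ × ℕ) :=
  (List.range (n + 1 - low)).map fun r => (i, n - r)

/-- `Γ(k)`: rows `i = k, k−1, …, 1`, row `i` being `(i,n),…,(i,k+1)`. -/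
def GammaK (n k : ℕ) : List (ℕ × ℕ) :=
  (List.range k).flatMap fun s => rowL n (k - s) (k + 1)

/-- `Γ'(k)`: rows `i = k, k−1, …, 1`, row `i` being `(i,n),…,(i,k+2)`
(the last transposition `(i,k+1)` of each row of `Γ(k)` removed). -/
def GammaK' (n k : ℕ) : List (ℕ × ℕ) :=
  (List.range k).flatMap fun s => rowL n (k - s) (k + 2)

/-- The λ-chain `Γ = Γ_{λ_1} Γ_{λ_1−1} ⋯ Γ_2`, where `Γ_j = Γ'(λ'_j)` if
`j = min{i : λ'_i = λ'_j}` (equivalently `λ'_{j−1} ≠ λ'_j`) and `Γ_j = Γ(λ'_j)` otherwise.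
Each entry records its segment index `j` together with the root `(i,k)`. -/
def lamChain (n : ℕ) (lam : ℕ → ℕ) : List (ℕ × ℕ × ℕ) :=
  (List.range (lam 1 - 1)).flatMap fun s =>
    let j := lam 1 - s
    let seg :=
      if conj n lam (j - 1) = conj n lam j then GammaK n (conj n lam j)
      else GammaK' n (conj n lam j)
    seg.map fun p => (j, p.1, p.2)

/-- The underlying list of roots (transpositions) of the λ-chain. -/
def chainRoots (Γ : List (ℕ × ℕ × ℕ)) : List (ℕ × ℕ) := Γ.map fun e => e.2

/-! ### The Ram–Yip weight and the filling map -/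

/-- The Ram–Yip weight `RY(w,T)` of a folding pair, where `T` is the subsequence of the
λ-chain at positions `J`. -/
def RY (n : ℕ) [NeZero n] (lam : ℕ → ℕ) (w : Equiv.Perm (Fin n)) (J : Finset ℕ) : Kqt :=
  tt ^ (((len w : ℤ) - (len (wT w (chainRoots (lamChain n lam)) J) : ℤ) - (J.card : ℤ)) / 2) *
    (1 - tt) ^ J.card *
    ∏ r ∈ J,
      (let e := (lamChain n lam).getD r (0, 0, 0)
       let a := lam e.2.1 - (e.1 - 1)
       if isPosDec w (chainRoots (lamChain n lam)) J r then
         (1 - qq ^ a * tt ^ (e.2.2 - e.2.1))⁻¹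
       else qq ^ a * tt ^ (e.2.2 - e.2.1) * (1 - qq ^ a * tt ^ (e.2.2 - e.2.1))⁻¹)

/-- `π_j = w T_{λ_1} ⋯ T_{j+1}`: the product of `w` with the entries of `T` lying in the
segments of column index `> j`. -/
def pij (n : ℕ) [NeZero n] (lam : ℕ → ℕ) (w : Equiv.Perm (Fin n)) (J : Finset ℕ) (j : ℕ) :
    Equiv.Perm (Fin n) :=
  applyTs w (pickP (chainRoots (lamChain n lam))
    (J.filter fun r => j < ((lamChain n lam).getD r (0, 0, 0)).1))

/-- The filling map `f`: `f(w,T)(i,j) = π_j(i)` on cells of λ (and `0` off the diagram). -/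
def fmap (n : ℕ) [NeZero n] (lam : ℕ → ℕ) (w : Equiv.Perm (Fin n)) (J : Finset ℕ) :
    ℕ × ℕ → ℕ :=
  fun c => if c ∈ cells n lam then pv (pij n lam w J c.2) c.1 else 0

/-- The fiber `f⁻¹(σ)` of the filling map over σ, inside `ℱ(λ)`. -/
def fiberSet (n : ℕ) [NeZero n] (lam : ℕ → ℕ) (σ : ℕ × ℕ → ℕ) :
    Finset (Equiv.Perm (Fin n) × Finset ℕ) :=
  (Finset.univ ×ˢ (Finset.range (lamChain n lam).length).powerset).filter
    fun p => ∀ u ∈ cells n lam, fmap n lam p.1 p.2 u = σ u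

/-- The Finset of all nonattacking fillings `T(λ,n)` (normalized to vanish off the diagram). -/
def TFinset (n : ℕ) (lam : ℕ → ℕ) : Finset (ℕ × ℕ → ℕ) :=
  (((cells n lam).pi fun _ => Finset.Icc 1 n).image
      fun g c => if h : c ∈ cells n lam then g c h else 0).filter
    fun σ => NonAttacking n lam σ

/-- The monomial `x^{content(σ)} = x_1^{c_1} ⋯ x_n^{c_n}` in `ℚ(q,t)[x_1,…,x_n]`. -/
def contentMon (n : ℕ) [NeZero n] (lam : ℕ → ℕ) (σ : ℕ × ℕ → ℕ) :
    MvPolynomial (Fin n) Kqt :=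
  ∏ a ∈ Finset.Icc 1 n,
    (MvPolynomial.X (idx n a)) ^ (((cells n lam).filter fun c => σ c = a).card)

/-! ### The weight μ(T) and the content vector (for Statement 4) -/

/-- `l_r = #{r' ≤ r : β_{r'} = β_r}` for the `r`-th entry of the λ-chain (0-based positions). -/
def lcount (Γ : List (ℕ × ℕ × ℕ)) (r : ℕ) : ℕ :=
  ((List.range (r + 1)).filter fun r' => (Γ.getD r' (0, 0, 0)).2 = (Γ.getD r (0, 0, 0)).2).length

/-- The affine map `r̂_r : v ↦ v − (v_i − v_k − l_r)(e_i − e_k)` of `ℝⁿ`,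
for the `r`-th entry `(i,k)` of the λ-chain. -/
def hatr (n : ℕ) [NeZero n] (Γ : List (ℕ × ℕ × ℕ)) (r : ℕ) (v : Fin n → ℝ) : Fin n → ℝ :=
  fun x =>
    v x - (v (idx n (Γ.getD r (0, 0, 0)).2.1) - v (idx n (Γ.getD r (0, 0, 0)).2.2)
            - (lcount Γ r : ℝ)) *
      ((if x = idx n (Γ.getD r (0, 0, 0)).2.1 then (1 : ℝ) else 0) -
        (if x = idx n (Γ.getD r (0, 0, 0)).2.2 then (1 : ℝ) else 0))

/-- `μ(T) = r̂_{j_1} r̂_{j_2} ⋯ r̂_{j_s}(λ) ∈ ℝⁿ` for `T` the subsequence of the λ-chain at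
positions `J = {j_1 < … < j_s}`. -/
def muT (n : ℕ) [NeZero n] (lam : ℕ → ℕ) (J : Finset ℕ) : Fin n → ℝ :=
  (J.sort (· ≤ ·)).foldr (hatr n (lamChain n lam)) fun x => (lam (x.val + 1) : ℝ)

/-- The action of `S_n` on `ℝⁿ` by permuting coordinates: `(w(v))_{w(i)} = v_i`. -/
def wAct {n : ℕ} [NeZero n] (w : Equiv.Perm (Fin n)) (v : Fin n → ℝ) : Fin n → ℝ :=
  fun x => v (w⁻¹ x)

/-- The content vector of a filling, as an element of `ℝⁿ`. -/
def contentVec (n : ℕ) (lam : ℕ → ℕ) (σ : ℕ × ℕ → ℕ) : Fin n → ℝ :=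
  fun x => (((cells n lam).filter fun c => σ c = x.val + 1).card : ℝ)

/-! ### Row sums (Statements 5 and 6) -/

/-- The weight of a subsequence `T` (at positions `J`) of a list `Δ` of transpositions, in the
single-`q` setting: `t^{(ℓ(wT)−ℓ(w)−|T|)/2}(1−t)^{|T|} Π_{(i,k)∈T⁺} 1/(1−q t^{k−i})
Π_{(i,k)∈T⁻} q t^{k−i}/(1−q t^{k−i})`, positivity in the increasing-length convention. -/
def RYrow (n : ℕ) [NeZero n] (w : Equiv.Perm (Fin n)) (Δ : List (ℕ × ℕ)) (J : Finset ℕ) : Kqt :=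
  tt ^ (((len (wT w Δ J) : ℤ) - (len w : ℤ) - (J.card : ℤ)) / 2) * (1 - tt) ^ J.card *
    ∏ r ∈ J,
      (let e := Δ.getD r (0, 0)
       if isPosInc w Δ J r then (1 - qq * tt ^ (e.2 - e.1))⁻¹
       else qq * tt ^ (e.2 - e.1) * (1 - qq * tt ^ (e.2 - e.1))⁻¹)

/-- `Δ = ((1,p+2),(1,p+3),…,(1,n))`. -/
def delta5 (n p : ℕ) : List (ℕ × ℕ) :=
  (List.range (n - p - 1)).map fun r => (1, p + 2 + r)

/-- `Δ = ((i,p+1),(i,p+2),…,(i,n))`. -/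
def delta6 (n i p : ℕ) : List (ℕ × ℕ) :=
  (List.range (n - p)).map fun r => (i, p + 1 + r)

/-! ### The field `ℚ(q_1,…,q_p,t)` and two-column fillings (Statements 7, 9, 10) -/

/-- The field `ℚ(q_1,…,q_p,t)` of rational functions in `p+1` variables. -/
abbrev Kq (p : ℕ) : Type := FractionRing (MvPolynomial (Fin (p + 1)) ℚ)

/-- The variable `q_i` (for `1 ≤ i ≤ p`). -/
def qv (p i : ℕ) : Kq p :=
  algebraMap (MvPolynomial (Fin (p + 1)) ℚ) (Kq p)
    (MvPolynomial.X ⟨(i - 1) % (p + 1), Nat.mod_lt _ (Nat.succ_pos p)⟩)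

/-- The variable `t`. -/
def tv (p : ℕ) : Kq p :=
  algebraMap (MvPolynomial (Fin (p + 1)) ℚ) (Kq p) (MvPolynomial.X ⟨p, Nat.lt_succ_self p⟩)

/-- The multi-`q` weight of a subsequence `T` (at positions `J`) of `Δ`:
`t^{(ℓ(wT)−ℓ(w)−|T|)/2}(1−t)^{|T|} Π_{(i,k)∈T⁺} 1/(1−q_i t^{k−i})
Π_{(i,k)∈T⁻} q_i t^{k−i}/(1−q_i t^{k−i})`, positivity in the increasing-length convention. -/
def RYmulti (n p : ℕ) [NeZero n] (w : Equiv.Perm (Fin n)) (Δ : List (ℕ × ℕ)) (J : Finset ℕ) :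
    Kq p :=
  tv p ^ (((len (wT w Δ J) : ℤ) - (len w : ℤ) - (J.card : ℤ)) / 2) * (1 - tv p) ^ J.card *
    ∏ r ∈ J,
      (let e := Δ.getD r (0, 0)
       if isPosInc w Δ J r then (1 - qv p e.1 * tv p ^ (e.2 - e.1))⁻¹
       else qv p e.1 * tv p ^ (e.2 - e.1) * (1 - qv p e.1 * tv p ^ (e.2 - e.1))⁻¹)

/-- `Δ = ((1,p+1),…,(1,n),(2,p+1),…,(2,n),…,(p,p+1),…,(p,n))`. -/
def delta7 (n p : ℕ) : List (ℕ × ℕ) :=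
  (List.range p).flatMap fun s => (List.range (n - p)).map fun r => (s + 1, p + 1 + r)

/-- The cells of the two-column filling `C_2C_1`, with right column (column 1) of length `p'`
and left column (column 2) of length `p`. -/
def cells2 (p p' : ℕ) : Finset (ℕ × ℕ) :=
  (Finset.Icc 1 p' ×ˢ ({1} : Finset ℕ)) ∪ (Finset.Icc 1 p ×ˢ ({2} : Finset ℕ))

/-- The entry of the two-column filling `C_2C_1` at a cell. -/
def entry2 (C2 C1 : ℕ → ℕ) : ℕ × ℕ → ℕ :=
  fun c => if c.2 = 1 then C1 c.1 else C2 c.1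

/-- `|Inv(C_2C_1)|`: the number of pairs of attacking cells `u` before `v` in reading order
with `entry(u) > entry(v)`. -/
def invPairs2 (C2 C1 : ℕ → ℕ) (p p' : ℕ) : ℕ :=
  ((cells2 p p' ×ˢ cells2 p p').filter fun x =>
    attack x.1 x.2 ∧ readBefore x.1 x.2 ∧ entry2 C2 C1 x.2 < entry2 C2 C1 x.1).card

/-- `inv(C_2C_1) = |Inv(C_2C_1)| − Σ_{u ∈ Des(C_2C_1)} leg(u)` where
`Des(C_2C_1) = {(i,1) : i ≤ p, C_1(i) > C_2(i)}` and `leg(i,1) = p' − i`. -/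
def inv2 (C2 C1 : ℕ → ℕ) (p p' : ℕ) : ℤ :=
  (invPairs2 C2 C1 p p' : ℤ) -
    ∑ i ∈ (Finset.Icc 1 p).filter fun i => C2 i < C1 i, ((p' : ℤ) - (i : ℤ))

/-- `inv(C) = #{(i,k) : i < k, C(i) > C(k)}` for a single column `C` of length `p`. -/
def invColumn (C : ℕ → ℕ) (p : ℕ) : ℕ :=
  ((Finset.Icc 1 p ×ˢ Finset.Icc 1 p).filter fun x => x.1 < x.2 ∧ C x.2 < C x.1).card

end

end Compress

/-!
The permutations `π_j` are built column by column, from the rightmost column leftwards.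
Column 1 is matched by any permutation extending the injective map `i ↦ σ(i,1)`. Given `π_{j-1}`
matching column `j-1`, let `k = λ'_j`; the rows of `Γ_j` are `(i,n),…,(i,low)` with `low = k+1`,
or `low = k+2` when column `j-1` is longer than column `j`. The values `σ(1,j),…,σ(k,j)` are
installed into `π_{j-1}` one row at a time. The value wanted at row `i` sits either at position
`i` or at some position `p ≥ low`: not at `p < i`, which already holds `σ(p,j)` (column `j` is
injective), and not at `i < p < low`, where `π_{j-1}(p) = σ(p,j-1)` and the cells `(i,j)`,
`(p,j-1)` attack each other.
In the second case the transposition `(i,p)` of row `i` of `Γ_j` is put into `T_j`; it moves no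
position `< low` other than `i`.
-/

namespace Compress

attribute [local instance] Classical.propDecidable

section Permutations

variable {n : ℕ} [NeZero n]

lemma idx_val {i : ℕ} (h1 : 1 ≤ i) (h2 : i ≤ n) : (idx n i).val = i - 1 := by
  simp [idx, Nat.mod_eq_of_lt (show i - 1 < n by omega)]

lemma idx_injOn : Set.InjOn (idx n) (Set.Icc 1 n) := fun i ⟨hi1, hi2⟩ j ⟨hj1, hj2⟩ h => by
  have := congrArg Fin.val h
  rw [idx_val hi1 hi2, idx_val hj1 hj2] at this
  omega

lemma idx_val_add_one (x : Fin n) : idx n (x.val + 1) = x :=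
  Fin.ext (by rw [idx_val (by omega) x.isLt]; simp)

lemma exists_pv_eq (w : Equiv.Perm (Fin n)) {x : ℕ} (h1 : 1 ≤ x) (h2 : x ≤ n) :
    ∃ p, 1 ≤ p ∧ p ≤ n ∧ pv w p = x := by
  refine ⟨(w⁻¹ (idx n x)).val + 1, by omega, (w⁻¹ (idx n x)).isLt, ?_⟩
  rw [pv, idx_val_add_one, Equiv.Perm.coe_inv, Equiv.apply_symm_apply, idx_val h1 h2]
  omega

lemma exists_perm_pv_eq {k : ℕ} (hk : k ≤ n) {v : ℕ → ℕ}
    (hv : Set.MapsTo v (Set.Icc 1 k) (Set.Icc 1 n)) (hinj : Set.InjOn v (Set.Icc 1 k)) :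
    ∃ π : Equiv.Perm (Fin n), ∀ i, 1 ≤ i → i ≤ k → pv π i = v i := by
  have hsucc : ∀ a : Fin k, a.val + 1 ∈ Set.Icc 1 k := fun a => ⟨by omega, a.isLt⟩
  have hIcc : Set.Icc 1 k ⊆ Set.Icc 1 n := Set.Icc_subset_Icc_right hk
  obtain ⟨π, hπ⟩ := Equiv.Perm.exists_extending_pair (fun a : Fin k => idx n (a.val + 1))
    (fun a => idx n (v (a.val + 1)))
    (fun a b h => Fin.ext (by have := idx_injOn (hIcc (hsucc a)) (hIcc (hsucc b)) h; omega))
    (fun a b h => Fin.ext (by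
      have := hinj (hsucc a) (hsucc b) (idx_injOn (hv (hsucc a)) (hv (hsucc b)) h)
      omega))
  refine ⟨π, fun i h1 h2 => ?_⟩
  obtain ⟨a, rfl⟩ : ∃ a : Fin k, i = a.val + 1 := ⟨⟨i - 1, by omega⟩, (Nat.sub_add_cancel h1).symm⟩
  obtain ⟨hv1, hv2⟩ := hv (hsucc a)
  rw [pv, hπ a, idx_val hv1 hv2]
  omega

lemma pv_mul_tr_of_ne (u : Equiv.Perm (Fin n)) {a b p : ℕ} (ha : a ∈ Set.Icc 1 n)
    (hb : b ∈ Set.Icc 1 n) (hp : p ∈ Set.Icc 1 n) (hpa : p ≠ a) (hpb : p ≠ b) :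
    pv (u * tr n a b) p = pv u p := by
  rw [pv, pv, tr, Equiv.Perm.mul_apply, Equiv.swap_apply_of_ne_of_ne
    ((idx_injOn.ne_iff hp ha).2 hpa) ((idx_injOn.ne_iff hp hb).2 hpb)]

lemma pv_mul_tr_left (u : Equiv.Perm (Fin n)) (a b : ℕ) : pv (u * tr n a b) a = pv u b := by
  rw [pv, pv, tr, Equiv.Perm.mul_apply, Equiv.swap_apply_left]

lemma applyTs_append (w : Equiv.Perm (Fin n)) (L₁ L₂ : List (ℕ × ℕ)) :
    applyTs w (L₁ ++ L₂) = applyTs (applyTs w L₁) L₂ :=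
  List.foldl_append

end Permutations

section Subsequences

lemma sort_union_of_lt {A B : Finset ℕ} (h : ∀ a ∈ A, ∀ b ∈ B, a < b) :
    (A ∪ B).sort (· ≤ ·) = A.sort (· ≤ ·) ++ B.sort (· ≤ ·) := by
  refine List.Perm.eq_of_pairwise' (r := (· ≤ ·)) (Finset.pairwise_sort _ _) ?_ ?_
  · rw [List.pairwise_append]
    exact ⟨Finset.pairwise_sort _ _, Finset.pairwise_sort _ _,
      fun a ha b hb => (h a ((Finset.mem_sort _).1 ha) b ((Finset.mem_sort _).1 hb)).le⟩
  · apply List.perm_of_nodup_nodup_toFinset_eq (Finset.sort_nodup _ _)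
    · exact (Finset.sort_nodup _ _).append (Finset.sort_nodup _ _)
        (fun a ha hb => lt_irrefl a (h a (by simpa using ha) a (by simpa using hb)))
    · ext x
      simp

lemma sort_image_add (a : ℕ) (S : Finset ℕ) :
    (S.image (a + ·)).sort (· ≤ ·) = (S.sort (· ≤ ·)).map (a + ·) := by
  refine List.Perm.eq_of_pairwise' (r := (· ≤ ·)) (Finset.pairwise_sort _ _) ?_ ?_
  · exact List.pairwise_map.2 ((Finset.pairwise_sort S _).imp fun h => by omega)
  · apply List.perm_of_nodup_nodup_toFinset_eq (Finset.sort_nodup _ _)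
    · exact (Finset.sort_nodup _ _).map fun x y hxy => by omega
    · ext x
      simp

lemma union_image_add_subset_range {S J : Finset ℕ} {a b : ℕ} (hS : S ⊆ range a)
    (hJ : J ⊆ range b) : S ∪ J.image (a + ·) ⊆ range (a + b) := by
  refine Finset.union_subset (hS.trans (Finset.range_subset_range.2 (by omega))) fun r hr => ?_
  obtain ⟨x, hx, rfl⟩ := Finset.mem_image.1 hr
  have := Finset.mem_range.1 (hJ hx)
  exact Finset.mem_range.2 (by omega)

lemma pickP_empty (Δ : List (ℕ × ℕ)) : pickP Δ ∅ = [] := by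
  simp [pickP]

lemma pickP_append {A B : List (ℕ × ℕ)} {S : Finset ℕ} (hS : S ⊆ range A.length)
    (J : Finset ℕ) : pickP (A ++ B) (S ∪ J.image (A.length + ·)) = pickP A S ++ pickP B J := by
  have hlt : ∀ a ∈ S, ∀ b ∈ J.image (A.length + ·), a < b := by
    intro a ha b hb
    obtain ⟨r, -, rfl⟩ := Finset.mem_image.1 hb
    have := Finset.mem_range.1 (hS ha)
    omega
  rw [pickP, sort_union_of_lt hlt, sort_image_add, List.map_append, List.map_map]
  congr 1
  · exact List.map_congr_left fun r hr =>
      List.getD_append _ _ _ _ (Finset.mem_range.1 (hS ((Finset.mem_sort _).1 hr)))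
  · exact List.map_congr_left fun r _ => by
      rw [Function.comp_apply, List.getD_append_right _ _ _ _ (by omega), Nat.add_sub_cancel_left]

end Subsequences

section Reaches

variable {n : ℕ} [NeZero n]

def Reaches (Δ : List (ℕ × ℕ)) (u u' : Equiv.Perm (Fin n)) : Prop :=
  ∃ S ⊆ range Δ.length, applyTs u (pickP Δ S) = u'

lemma Reaches.refl (Δ : List (ℕ × ℕ)) (u : Equiv.Perm (Fin n)) : Reaches Δ u u :=
  ⟨∅, Finset.empty_subset _, by rw [pickP_empty]; rfl⟩

lemma Reaches.append {A B : List (ℕ × ℕ)} {u v w : Equiv.Perm (Fin n)} (h₁ : Reaches A u v)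
    (h₂ : Reaches B v w) : Reaches (A ++ B) u w := by
  obtain ⟨S, hS, rfl⟩ := h₁
  obtain ⟨J, hJ, rfl⟩ := h₂
  refine ⟨S ∪ J.image (A.length + ·), ?_, by rw [pickP_append hS, applyTs_append]⟩
  rw [List.length_append]
  exact union_image_add_subset_range hS hJ

lemma reaches_mul_tr_of_mem {Δ : List (ℕ × ℕ)} {a b : ℕ} (h : (a, b) ∈ Δ)
    (u : Equiv.Perm (Fin n)) : Reaches Δ (u * tr n a b) u := by
  obtain ⟨r, hr, he⟩ := List.getElem_of_mem h
  refine ⟨{r}, by simpa using hr, ?_⟩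
  simp only [pickP, Finset.sort_singleton, List.map_cons, List.map_nil,
    List.getD_eq_getElem _ _ hr, he]
  simp [applyTs, tr, mul_assoc]

end Reaches

section Rows

/-- `Γ(k) = rowsL n k (k+1)` and `Γ'(k) = rowsL n k (k+2)`. -/
def rowsL (n k low : ℕ) : List (ℕ × ℕ) :=
  (List.range k).flatMap fun s => rowL n (k - s) low

lemma rowsL_succ (n k low : ℕ) : rowsL n (k + 1) low = rowL n (k + 1) low ++ rowsL n k low := by
  simp only [rowsL, List.range_succ_eq_map, List.flatMap_cons, List.flatMap_map, Nat.sub_zero,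
    Nat.succ_sub_succ]

lemma mem_rowL {n i low p : ℕ} (h1 : low ≤ p) (h2 : p ≤ n) : (i, p) ∈ rowL n i low :=
  List.mem_map.2 ⟨n - p, List.mem_range.2 (by omega), by rw [Nat.sub_sub_self h2]⟩

variable {n : ℕ} [NeZero n]

lemma exists_reaches_rowsL (π' : Equiv.Perm (Fin n)) {v : ℕ → ℕ} {k low : ℕ} (hk : k ≤ n)
    (hlow : k < low) (hv : Set.MapsTo v (Set.Icc 1 k) (Set.Icc 1 n))
    (hinj : Set.InjOn v (Set.Icc 1 k))
    (hvb : ∀ i p, 1 ≤ i → i ≤ k → i < p → p < low → v i ≠ pv π' p) :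
    ∃ π, Reaches (rowsL n k low) π π' ∧ (∀ i, 1 ≤ i → i ≤ k → pv π i = v i) ∧
      ∀ p, k < p → p < low → p ≤ n → pv π p = pv π' p := by
  induction k with
  | zero => exact ⟨π', Reaches.refl _ _, fun i _ _ => by omega, fun _ _ _ _ => rfl⟩
  | succ k ih =>
    have hsub : Set.Icc 1 k ⊆ Set.Icc 1 (k + 1) := Set.Icc_subset_Icc_right (by omega)
    obtain ⟨u, hu, hval, hrest⟩ := ih (by omega) (by omega) (hv.mono_left hsub) (hinj.mono hsub)
      fun i p h1 h2 => hvb i p h1 (by omega)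
    have hk1 : k + 1 ∈ Set.Icc 1 (k + 1) := ⟨by omega, le_rfl⟩
    obtain ⟨m, hm1, hmn, hm⟩ := exists_pv_eq u (hv hk1).1 (hv hk1).2
    have hm_cases : m = k + 1 ∨ low ≤ m := by
      by_contra! h
      rcases Nat.lt_or_gt_of_ne h.1 with hlt | hgt
      · exact hlt.ne (hinj ⟨hm1, by omega⟩ hk1 ((hval m hm1 (by omega)).symm.trans hm))
      · exact hvb (k + 1) m (by omega) le_rfl hgt h.2
          ((hrest m (by omega) h.2 hmn).symm.trans hm).symm
    have hmI : m ∈ Set.Icc 1 n := ⟨hm1, hmn⟩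
    have hkI : k + 1 ∈ Set.Icc 1 n := ⟨by omega, hk⟩
    refine ⟨u * tr n (k + 1) m, ?_, fun i h1 h2 => ?_, fun p h1 h2 h3 => ?_⟩
    · rw [rowsL_succ]
      refine Reaches.append ?_ hu
      rcases hm_cases with rfl | hm_low
      · rw [tr, Equiv.swap_self]
        exact Reaches.refl _ u
      · exact reaches_mul_tr_of_mem (mem_rowL hm_low hmn) u
    · rcases Nat.lt_or_ge i (k + 1) with hi | hi
      · rw [pv_mul_tr_of_ne u hkI hmI ⟨h1, by omega⟩ (by omega) (by omega)]
        exact hval i h1 (by omega)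
      · rw [show i = k + 1 by omega, pv_mul_tr_left, hm]
    · rw [pv_mul_tr_of_ne u hkI hmI ⟨by omega, by omega⟩ (by omega) (by omega)]
      exact hrest p (by omega) h2 h3

end Rows

section Diagram

lemma antitone_conj (n : ℕ) (lam : ℕ → ℕ) : Antitone (conj n lam) := fun _ _ h =>
  Finset.card_le_card (Finset.monotone_filter_right _ fun _ _ hi => h.trans hi)

lemma conj_le (n : ℕ) (lam : ℕ → ℕ) (j : ℕ) : conj n lam j ≤ n - 1 :=
  (Finset.card_filter_le _ _).trans (by simp)

variable {n : ℕ} {lam : ℕ → ℕ}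

lemma le_conj_iff (hanti : AntitoneOn lam (Set.Icc 1 (n - 1))) {i j : ℕ} (hi : 1 ≤ i) :
    i ≤ conj n lam j ↔ i ≤ n - 1 ∧ j ≤ lam i := by
  constructor
  · intro h
    by_contra hc
    have hsub : (Finset.Icc 1 (n - 1)).filter (fun x => j ≤ lam x) ⊆ Finset.Icc 1 (i - 1) := by
      intro x hx
      rw [Finset.mem_filter, Finset.mem_Icc] at hx
      refine Finset.mem_Icc.2 ⟨hx.1.1, ?_⟩
      by_contra hxi
      exact hc ⟨by omega, hx.2.trans (hanti ⟨hi, by omega⟩ ⟨hx.1.1, hx.1.2⟩ (by omega))⟩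
    have := Finset.card_le_card hsub
    rw [Nat.card_Icc] at this
    exact absurd h (by unfold conj; omega)
  · rintro ⟨hin, hji⟩
    have hsub : Finset.Icc 1 i ⊆ (Finset.Icc 1 (n - 1)).filter (fun x => j ≤ lam x) := by
      intro x hx
      rw [Finset.mem_Icc] at hx
      exact Finset.mem_filter.2 ⟨Finset.mem_Icc.2 ⟨hx.1, by omega⟩,
        hji.trans (hanti ⟨hx.1, by omega⟩ ⟨hi, hin⟩ hx.2)⟩
    simpa [conj] using Finset.card_le_card hsub

lemma mem_cells_iff_le_conj (hanti : AntitoneOn lam (Set.Icc 1 (n - 1))) {i j : ℕ}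
    (hi : 1 ≤ i) (hj : 1 ≤ j) : (i, j) ∈ cells n lam ↔ i ≤ conj n lam j := by
  rw [le_conj_iff hanti hi]
  simp only [cells, Finset.mem_filter, Finset.mem_product, Finset.mem_Icc]
  constructor
  · rintro ⟨⟨⟨-, hin⟩, -⟩, hji⟩
    exact ⟨hin, hji⟩
  · rintro ⟨hin, hji⟩
    exact ⟨⟨⟨hi, hin⟩, hj, hji.trans (hanti ⟨le_rfl, by omega⟩ ⟨hi, hin⟩ hi)⟩, hji⟩

variable {σ : ℕ × ℕ → ℕ}

lemma NonAttacking.mapsTo_column {j : ℕ} (hσ : NonAttacking n lam σ)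
    (hanti : AntitoneOn lam (Set.Icc 1 (n - 1))) (hj : 1 ≤ j) :
    Set.MapsTo (fun i => σ (i, j)) (Set.Icc 1 (conj n lam j)) (Set.Icc 1 n) := fun _ hi =>
  Finset.mem_Icc.1 (hσ.1 _ ((mem_cells_iff_le_conj hanti hi.1 hj).2 hi.2))

lemma NonAttacking.injOn_column {j : ℕ} (hσ : NonAttacking n lam σ)
    (hanti : AntitoneOn lam (Set.Icc 1 (n - 1))) (hj : 1 ≤ j) :
    Set.InjOn (fun i => σ (i, j)) (Set.Icc 1 (conj n lam j)) := fun i hi i' hi' h => by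
  by_contra hne
  exact hσ.2 _ ((mem_cells_iff_le_conj hanti hi.1 hj).2 hi.2) _
    ((mem_cells_iff_le_conj hanti hi'.1 hj).2 hi'.2) (Or.inl ⟨rfl, hne⟩) h

lemma NonAttacking.ne_of_lt {i p j : ℕ} (hσ : NonAttacking n lam σ)
    (hanti : AntitoneOn lam (Set.Icc 1 (n - 1))) (hi : 1 ≤ i) (hj : 1 ≤ j)
    (hij : i ≤ conj n lam (j + 1)) (hip : i < p) (hpj : p ≤ conj n lam j) :
    σ (i, j + 1) ≠ σ (p, j) :=
  hσ.2 _ ((mem_cells_iff_le_conj hanti hi (by omega)).2 hij) _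
    ((mem_cells_iff_le_conj hanti (by omega) hj).2 hpj) (Or.inr (Or.inl ⟨rfl, hip⟩))

end Diagram

def AgreesOnColumn (n : ℕ) [NeZero n] (lam : ℕ → ℕ) (σ : ℕ × ℕ → ℕ) (j : ℕ)
    (π : Equiv.Perm (Fin n)) : Prop :=
  ∀ i, 1 ≤ i → i ≤ conj n lam j → pv π i = σ (i, j)

section Chain

variable {n : ℕ} {lam : ℕ → ℕ}

/-- The factor `Γ_j` of the λ-chain. -/
def chainSeg (n : ℕ) (lam : ℕ → ℕ) (j : ℕ) : List (ℕ × ℕ) :=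
  if conj n lam (j - 1) = conj n lam j then GammaK n (conj n lam j)
  else GammaK' n (conj n lam j)

/-- `Γ_c Γ_{c−1} ⋯ Γ_2`, each root tagged with the index of its factor. -/
def chainUpTo (n : ℕ) (lam : ℕ → ℕ) (c : ℕ) : List (ℕ × ℕ × ℕ) :=
  (List.range (c - 1)).flatMap fun s => (chainSeg n lam (c - s)).map fun p => (c - s, p.1, p.2)

lemma lamChain_eq_chainUpTo (n : ℕ) (lam : ℕ → ℕ) : lamChain n lam = chainUpTo n lam (lam 1) :=
  rfl

lemma chainUpTo_succ {c : ℕ} (hc : 1 ≤ c) :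
    chainUpTo n lam (c + 1) =
      (chainSeg n lam (c + 1)).map (fun p => (c + 1, p.1, p.2)) ++ chainUpTo n lam c := by
  obtain ⟨c, rfl⟩ := Nat.exists_eq_add_of_le' hc
  simp [chainUpTo, List.range_succ_eq_map, List.flatMap_map, Nat.add_sub_add_right]

lemma tag_getD_chainUpTo_le (c r : ℕ) : ((chainUpTo n lam c).getD r (0, 0, 0)).1 ≤ c := by
  rw [List.getD_eq_getElem?_getD]
  cases h : (chainUpTo n lam c)[r]? with
  | none => exact Nat.zero_le _
  | some e =>
    obtain ⟨s, -, hs⟩ := List.mem_flatMap.1 (List.mem_of_getElem? h)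
    obtain ⟨p, -, rfl⟩ := List.mem_map.1 hs
    exact Nat.sub_le _ _

lemma filter_lt_tag_chainUpTo_eq_empty {c j : ℕ} (hcj : c ≤ j) (J : Finset ℕ) :
    J.filter (fun r => j < ((chainUpTo n lam c).getD r (0, 0, 0)).1) = ∅ :=
  Finset.filter_false_of_mem fun r _ => ((tag_getD_chainUpTo_le c r).trans hcj).not_gt

lemma chainRoots_append (A B : List (ℕ × ℕ × ℕ)) :
    chainRoots (A ++ B) = chainRoots A ++ chainRoots B :=
  List.map_append

lemma chainRoots_map_tag (j : ℕ) (L : List (ℕ × ℕ)) :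
    chainRoots (L.map fun p => (j, p.1, p.2)) = L := by
  simp [chainRoots, Function.comp_def]

lemma chainSeg_eq_rowsL (j : ℕ) : ∃ low, conj n lam j < low ∧
    low ≤ conj n lam (j - 1) + 1 ∧ chainSeg n lam j = rowsL n (conj n lam j) low := by
  have hconj := antitone_conj n lam (Nat.sub_le j 1)
  by_cases h : conj n lam (j - 1) = conj n lam j
  · exact ⟨conj n lam j + 1, by omega, by omega, by rw [chainSeg, if_pos h]; rfl⟩
  · exact ⟨conj n lam j + 2, by omega, by omega, by rw [chainSeg, if_neg h]; rfl⟩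

lemma filter_tag_append {T Γ : List (ℕ × ℕ × ℕ)} {S : Finset ℕ} {j : ℕ}
    (hS : S ⊆ range T.length) (hT : ∀ e ∈ T, j < e.1) (J : Finset ℕ) :
    (S ∪ J.image (T.length + ·)).filter (fun r => j < ((T ++ Γ).getD r (0, 0, 0)).1) =
      S ∪ (J.filter fun r => j < (Γ.getD r (0, 0, 0)).1).image (T.length + ·) := by
  rw [Finset.filter_union, Finset.filter_image]
  congr 1
  · refine Finset.filter_true_of_mem fun r hr => ?_
    have hr := Finset.mem_range.1 (hS hr)
    rw [List.getD_append _ _ _ _ hr, List.getD_eq_getElem _ _ hr]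
    exact hT _ (List.getElem_mem hr)
  · refine congrArg _ (Finset.filter_congr fun r _ => ?_)
    rw [List.getD_append_right _ _ _ _ (by omega), Nat.add_sub_cancel_left]

end Chain

def RealizesUpTo (n : ℕ) [NeZero n] (lam : ℕ → ℕ) (σ : ℕ × ℕ → ℕ) (c : ℕ)
    (w : Equiv.Perm (Fin n)) (J : Finset ℕ) : Prop :=
  J ⊆ range (chainUpTo n lam c).length ∧ ∀ j, 1 ≤ j → j ≤ c →
    AgreesOnColumn n lam σ j (applyTs w (pickP (chainRoots (chainUpTo n lam c))
      (J.filter fun r => j < ((chainUpTo n lam c).getD r (0, 0, 0)).1)))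

section Realizes

variable {n : ℕ} [NeZero n] {lam : ℕ → ℕ} {σ : ℕ × ℕ → ℕ}

lemma RealizesUpTo.agreesOnColumn {c : ℕ} {w : Equiv.Perm (Fin n)} {J : Finset ℕ}
    (h : RealizesUpTo n lam σ c w J) (hc : 1 ≤ c) : AgreesOnColumn n lam σ c w := by
  have := h.2 c hc le_rfl
  rwa [filter_lt_tag_chainUpTo_eq_empty le_rfl, pickP_empty] at this

lemma exists_realizesUpTo_one (hσ : NonAttacking n lam σ)
    (hanti : AntitoneOn lam (Set.Icc 1 (n - 1))) : ∃ w J, RealizesUpTo n lam σ 1 w J := by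
  obtain ⟨w, hw⟩ := exists_perm_pv_eq ((conj_le n lam 1).trans (Nat.sub_le n 1))
    (hσ.mapsTo_column hanti le_rfl) (hσ.injOn_column hanti le_rfl)
  refine ⟨w, ∅, Finset.empty_subset _, fun j h1 h2 => ?_⟩
  obtain rfl : j = 1 := by omega
  rwa [Finset.filter_empty, pickP_empty]

lemma RealizesUpTo.exists_succ (hσ : NonAttacking n lam σ)
    (hanti : AntitoneOn lam (Set.Icc 1 (n - 1))) {c : ℕ} (hc : 1 ≤ c) {w : Equiv.Perm (Fin n)}
    {J : Finset ℕ} (h : RealizesUpTo n lam σ c w J) :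
    ∃ w' J', RealizesUpTo n lam σ (c + 1) w' J' := by
  obtain ⟨low, hlow, hlow', hseg⟩ := chainSeg_eq_rowsL (n := n) (lam := lam) (c + 1)
  rw [Nat.add_sub_cancel] at hlow'
  have hw := h.agreesOnColumn hc
  obtain ⟨w', ⟨S, hS, hSw⟩, hw', -⟩ := exists_reaches_rowsL w
    ((conj_le n lam _).trans (Nat.sub_le n 1)) hlow
    (hσ.mapsTo_column hanti (by omega)) (hσ.injOn_column hanti (by omega))
    fun i p hi hik hip hpl => by
      rw [hw p (by omega) (by omega)]
      exact hσ.ne_of_lt hanti hi hc hik hip (by omega)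
  set T := (chainSeg n lam (c + 1)).map fun p => (c + 1, p.1, p.2)
  have hST : S ⊆ range T.length := by simpa [T, hseg] using hS
  refine ⟨w', S ∪ J.image (T.length + ·), ?_, fun j hj1 hj2 => ?_⟩
  · rw [chainUpTo_succ hc, List.length_append]
    exact union_image_add_subset_range hST h.1
  rcases Nat.lt_or_ge j (c + 1) with hj | hj
  · have hlen : T.length = (chainSeg n lam (c + 1)).length := List.length_map _
    rw [chainUpTo_succ hc, filter_tag_append hST (by simp [T]; omega), hlen, chainRoots_append,
      chainRoots_map_tag, pickP_append (by simpa [T] using hST), applyTs_append, hseg, hSw]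
    exact h.2 j hj1 (by omega)
  · obtain rfl : j = c + 1 := by omega
    rwa [filter_lt_tag_chainUpTo_eq_empty le_rfl, pickP_empty]

lemma exists_realizesUpTo (hσ : NonAttacking n lam σ)
    (hanti : AntitoneOn lam (Set.Icc 1 (n - 1))) (c : ℕ) :
    ∃ w J, RealizesUpTo n lam σ c w J := by
  induction c with
  | zero => exact ⟨1, ∅, Finset.empty_subset _, fun j h1 h2 => by omega⟩
  | succ c ih =>
    rcases Nat.eq_zero_or_pos c with rfl | hc
    · exact exists_realizesUpTo_one hσ hanti
    · obtain ⟨w, J, h⟩ := ih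
      exact h.exists_succ hσ hanti hc

end Realizes

lemma antitoneOn_of_lt_succ {n : ℕ} {lam : ℕ → ℕ}
    (hreg : ∀ i, 1 ≤ i → i < n → lam (i + 1) < lam i) : AntitoneOn lam (Set.Icc 1 (n - 1)) :=
  antitoneOn_of_succ_le Set.ordConnected_Icc fun a _ ha hsa => by
    rw [Order.succ_eq_add_one] at hsa ⊢
    exact (hreg a ha.1 (by have := hsa.2; omega)).le

theorem fmap_surjective_general (n : ℕ) [NeZero n] (lam : ℕ → ℕ)
    (hreg : ∀ i, 1 ≤ i → i < n → lam (i + 1) < lam i)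
    (σ : ℕ × ℕ → ℕ) (hσ : NonAttacking n lam σ) :
    ∃ (w : Equiv.Perm (Fin n)) (J : Finset ℕ),
      J ⊆ Finset.range (lamChain n lam).length ∧
        ∀ u ∈ cells n lam, fmap n lam w J u = σ u := by
  have hanti := antitoneOn_of_lt_succ hreg
  obtain ⟨w, J, hJ, hcol⟩ := exists_realizesUpTo hσ hanti (lam 1)
  rw [← lamChain_eq_chainUpTo] at hJ hcol
  refine ⟨w, J, hJ, fun ⟨i, j⟩ hu => ?_⟩
  obtain ⟨hij, -⟩ := Finset.mem_filter.1 hu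
  obtain ⟨⟨hi, -⟩, hj, hjm⟩ := by simpa only [Finset.mem_product, Finset.mem_Icc] using hij
  rw [fmap, if_pos hu]
  exact hcol j hj hjm i hi ((mem_cells_iff_le_conj hanti hi hj).1 hu)

/-- The filling map `f : ℱ(λ) → T(λ,n)` is surjective: every nonattacking
filling `σ ∈ T(λ,n)` is of the form `f(w,T)` for some folding pair `(w,T)`. -/
theorem fmap_surjective (n : ℕ) [NeZero n] (hn : 2 ≤ n) (lam : ℕ → ℕ)
    (hreg : ∀ i, 1 ≤ i → i < n → lam (i + 1) < lam i) (hzero : lam n = 0)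
    (σ : ℕ × ℕ → ℕ) (hσ : NonAttacking n lam σ) :
    ∃ (w : Equiv.Perm (Fin n)) (J : Finset ℕ),
      J ⊆ Finset.range (lamChain n lam).length ∧
        ∀ u ∈ cells n lam, fmap n lam w J u = σ u :=
  fmap_surjective_general n lam hreg σ hσ

end Compress
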